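/- Suppose the bilinear maximal operator A of local type (i.e., A(f,g)(x) depends only on the values of f, g on the ball B(x, 10K), such as A_{μ̂,E} for μ compactly supported in B(0,K) ⊂ ℝ^{2d} and E ⊂ [1,2]) is bounded from L^p × L^q to L^{r₀} with 1/r₀ ≤ 1/p + 1/q and 1/p + 1/q > 1. Then A is bounded from L^p × L^q to L^r where 1/r = 1/p + 1/q, with operator norm at most C(K) ‖A‖_{L^p×L^q→L^{r₀}}. -/

import Mathlib

open MeasureTheory Filter Set Pointwise Metric
open scoped ENNReal FourierTransform RealInnerProductSpace NNReal

noncomputable section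

/-- `coverNum E δ`: the minimal number of closed intervals of length `δ` needed to cover `E`. -/
def coverNum (E : Set ℝ) (δ : ℝ) : ℕ :=
  sInf {n : ℕ | ∃ s : Finset ℝ, s.card = n ∧ E ⊆ ⋃ x ∈ s, Set.Icc x (x + δ)}

/-- Upper Minkowski (box-counting) dimension of a set `E ⊆ ℝ`. -/
def dimM (E : Set ℝ) : ℝ :=
  limsup (fun δ : ℝ => Real.log (coverNum E δ) / Real.log (1 / δ))
    (nhdsWithin 0 (Set.Ioi 0))

abbrev Ed (d : ℕ) := EuclideanSpace ℝ (Fin d)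

/-- Bilinear Fourier multiplier operator
`T_m(f,g)(x) = ∫∫ 𝓕f(ξ) 𝓕g(η) m(ξ,η) e^{2πi x·(ξ+η)} dξ dη`. -/
def Tm {d : ℕ} (m : Ed d → Ed d → ℂ) (f g : Ed d → ℂ) (x : Ed d) : ℂ :=
  ∫ ξ, ∫ η, 𝓕 f ξ * 𝓕 g η * m ξ η *
    Complex.exp (2 * Real.pi * Complex.I * ((⟪x, ξ⟫ + ⟪x, η⟫ : ℝ) : ℂ))

/-- Negative-order Sobolev norm `‖f‖_{H^{-s}} = ‖(1+|ξ|²)^{-s/2} 𝓕f(ξ)‖_{L²}`. -/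
def sobNorm {d : ℕ} (s : ℝ) (f : Ed d → ℂ) : ℝ≥0∞ :=
  eLpNorm (fun ξ : Ed d => ((1 + ‖ξ‖ ^ 2) ^ (-s / 2) : ℝ) • 𝓕 f ξ) 2 volume

/-- Single-scale bilinear maximal operator over the dilation set `E`:
`A_{m,E}(f,g)(x) = sup_{t ∈ E} |T_{m_t}(f,g)(x)|` with `m_t(ξ,η) = m(tξ,tη)`. -/
def AmE {d : ℕ} (m : Ed d → Ed d → ℂ) (E : Set ℝ) (f g : Ed d → ℂ) (x : Ed d) : ℝ≥0∞ :=
  ⨆ t ∈ E, (‖Tm (fun ξ η => m (t • ξ) (t • η)) f g x‖₊ : ℝ≥0∞)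

/-- `L^r` norm of an `ℝ≥0∞`-valued function. -/
def lpNormENN {d : ℕ} (r : ℝ) (F : Ed d → ℝ≥0∞) : ℝ≥0∞ :=
  (∫⁻ x, F x ^ r) ^ (1 / r)

/-- Littlewood–Paley frequency cutoff: `φ̂` at scale `0`, `ψ̂(2^{-i}·)` at scale `i ≥ 1`. -/
def cutoff {d : ℕ} (φhat ψhat : Ed d → ℂ) (i : ℕ) (ξ : Ed d) : ℂ :=
  if i = 0 then φhat ξ else ψhat (((2:ℝ) ^ (-(i:ℝ))) • ξ)

/-- Single-scale bilinear maximal averaging operator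
`A_{μ̂,E}(f,g)(x) = sup_{t∈E} |∫ f(x−ty) g(x−tz) dμ(y,z)|`. -/
def Aavg {d : ℕ} (μ : Measure (Ed d × Ed d)) (E : Set ℝ) (f g : Ed d → ℂ)
    (x : Ed d) : ℝ≥0∞ :=
  ⨆ t ∈ E, (‖∫ p, f (x - t • p.1) * g (x - t • p.2) ∂μ‖₊ : ℝ≥0∞)


/-! ### Auxiliary lemmas -/

lemma jensen_aux {α : Type*} [MeasurableSpace α] (ν : Measure α) (hν : ν Set.univ ≤ 1)
    (H : α → ℝ≥0∞) {θ : ℝ} (hθ0 : 0 < θ) (hθ1 : θ ≤ 1) :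
    ∫⁻ x, H x ^ θ ∂ν ≤ 2 * (∫⁻ x, H x ∂ν) ^ θ := by
  set I := ∫⁻ x, H x ∂ν with hI
  have key : ∀ lam : ℝ≥0∞, lam ≠ 0 → lam ≠ ⊤ →
      ∫⁻ x, H x ^ θ ∂ν ≤ lam ^ (-θ) + lam ^ (1-θ) * I := by
    intro lam h0 ht
    have hpt : ∀ x, H x ^ θ ≤ lam ^ (-θ) + lam ^ (1-θ) * H x := by
      intro x
      have h1 : (lam * H x) ^ θ ≤ 1 + lam * H x := by
        rcases le_total (lam * H x) 1 with h | h
        · exact le_trans (ENNReal.rpow_le_one h hθ0.le) le_self_add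
        · calc (lam * H x) ^ θ ≤ (lam * H x) ^ (1:ℝ) :=
                ENNReal.rpow_le_rpow_of_exponent_le h hθ1
            _ = lam * H x := ENNReal.rpow_one _
            _ ≤ 1 + lam * H x := le_add_self
      have h2 : H x ^ θ = lam ^ (-θ) * (lam * H x) ^ θ := by
        rw [ENNReal.mul_rpow_of_nonneg _ _ hθ0.le, ENNReal.rpow_neg, ← mul_assoc,
          ENNReal.inv_mul_cancel (by simp [ENNReal.rpow_eq_zero_iff, h0, ht, hθ0, hθ0.ne']
            : lam ^ θ ≠ 0) (ENNReal.rpow_ne_top_of_nonneg hθ0.le ht), one_mul]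
      have e : lam ^ (-θ) * lam = lam ^ (1-θ) := by
        rw [show (1-θ) = -θ + 1 by ring, ENNReal.rpow_add _ _ h0 ht, ENNReal.rpow_one]
      calc H x ^ θ = lam ^ (-θ) * (lam * H x) ^ θ := h2
        _ ≤ lam ^ (-θ) * (1 + lam * H x) := mul_le_mul_right h1 _
        _ = lam ^ (-θ) + lam ^ (1-θ) * H x := by rw [mul_add, mul_one, ← mul_assoc, e]
    calc ∫⁻ x, H x ^ θ ∂ν ≤ ∫⁻ x, lam ^ (-θ) + lam ^ (1-θ) * H x ∂ν := lintegral_mono hpt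
      _ = lam ^ (-θ) * ν Set.univ + lam ^ (1-θ) * I := by
          rw [lintegral_add_left measurable_const, lintegral_const,
            lintegral_const_mul' _ _ (ENNReal.rpow_ne_top_of_nonneg (by linarith) ht)]
      _ ≤ lam ^ (-θ) + lam ^ (1-θ) * I := by
          gcongr
          exact le_trans (mul_le_mul_right hν _) (by simp)
  rcases eq_top_or_lt_top I with hItop | hIlt
  · rw [hItop, ENNReal.top_rpow_of_pos hθ0]
    simp
  rcases eq_or_ne I 0 with hI0 | hIne
  · rw [hI0, ENNReal.zero_rpow_of_pos hθ0, mul_zero]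
    refine ENNReal.le_of_forall_pos_le_add fun ε hε _ => ?_
    rw [zero_add]
    have h := key ((ε : ℝ≥0∞) ^ (-(1/θ)))
      (by simp [ENNReal.rpow_eq_zero_iff, hε.ne', hθ0])
      (by simp [ENNReal.rpow_eq_top_iff, hε.ne', hθ0, hθ0.ne'])
    rw [hI0, mul_zero, add_zero, ← ENNReal.rpow_mul] at h
    calc ∫⁻ x, H x ^ θ ∂ν ≤ (ε:ℝ≥0∞) ^ (-(1/θ) * -θ) := h
      _ = ε := by rw [show -(1/θ) * -θ = 1 by field_simp, ENNReal.rpow_one]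
  · have h := key I⁻¹ (by simp [hIlt.ne]) (by simp [hIne])
    have e1 : I⁻¹ ^ (-θ) = I ^ θ := by
      rw [ENNReal.inv_rpow, ENNReal.rpow_neg, inv_inv]
    have e2 : I⁻¹ ^ (1-θ) * I = I ^ θ := by
      calc I⁻¹ ^ (1-θ) * I = I ^ (-(1-θ)) * I ^ (1:ℝ) := by
            rw [ENNReal.inv_rpow, ← ENNReal.rpow_neg, ENNReal.rpow_one]
        _ = I ^ (-(1-θ) + 1) := (ENNReal.rpow_add _ _ hIne hIlt.ne).symm
        _ = I ^ θ := by ring_nf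
    rw [e1, e2, ← two_mul] at h
    exact h

lemma aux_coord_le {d : ℕ} (y : Ed d) (i : Fin d) : ‖y i‖ ≤ ‖y‖ := by
  rw [EuclideanSpace.norm_eq]
  rw [show ‖y i‖ = Real.sqrt (‖y i‖^2) from (Real.sqrt_sq (norm_nonneg _)).symm]
  apply Real.sqrt_le_sqrt
  exact Finset.single_le_sum (f := fun j => ‖y j‖^2) (fun j _ => sq_nonneg _) (Finset.mem_univ i)

lemma aux_cube_dist {d : ℕ} (x cl : Ed d) (hx : ∀ i, cl i ≤ x i ∧ x i < cl i + 1) :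
    ‖x - cl‖ ≤ Real.sqrt d := by
  rw [EuclideanSpace.norm_eq]
  apply Real.sqrt_le_sqrt
  have hbd : ∀ i, ‖(x - cl) i‖ ^ 2 ≤ 1 := by
    intro i
    have h1 := (hx i).1
    have h2 := (hx i).2
    have : (x - cl) i = x i - cl i := rfl
    rw [this, Real.norm_eq_abs, sq_abs]
    nlinarith
  calc ∑ i, ‖(x - cl) i‖ ^ 2 ≤ ∑ _i : Fin d, (1:ℝ) := Finset.sum_le_sum fun i _ => hbd i
    _ = d := by simp
/-- `L^r` norm of an `ℝ≥0∞`-valued function is `lpNormENN r`.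

STATEMENT 17: lifting `L^p × L^q → L^{r₀}` bounds of a local bilinear maximal operator
(such as `A_{μ̂,E}` with `μ` compactly supported in a ball of radius `K` and `E ⊆ [1,2]`)
to quasi-Banach Hölder bounds `L^p × L^q → L^r`, `1/r = 1/p + 1/q > 1`, with operator
norm at most `C(K)` times the original operator norm. -/
theorem local_lifting_to_Holder (d : ℕ) (hd : 1 ≤ d) (K : ℝ) (hK : 1 < K)
    (μ : Measure (Ed d × Ed d)) [IsFiniteMeasure μ]
    (hsupp : μ {p : Ed d × Ed d | ¬ Real.sqrt (‖p.1‖ ^ 2 + ‖p.2‖ ^ 2) ≤ K} = 0)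
    (E : Set ℝ) (hE : E ⊆ Set.Icc (1:ℝ) 2)
    (p q r₀ r : ℝ) (hp : 0 < p) (hq : 0 < q) (hr₀ : 0 < r₀)
    (hr₀' : 1/r₀ ≤ 1/p + 1/q) (hBanach : 1 < 1/p + 1/q) (hr : 1/r = 1/p + 1/q) :
    ∃ C : ℝ≥0, ∀ C₀ : ℝ≥0,
      (∀ f g : Ed d → ℂ, Measurable f → Measurable g →
        lpNormENN r₀ (Aavg μ E f g) ≤
          (C₀ : ℝ≥0∞) * eLpNorm f (ENNReal.ofReal p) volume *
            eLpNorm g (ENNReal.ofReal q) volume) →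
      ∀ f g : Ed d → ℂ, Measurable f → Measurable g →
        lpNormENN r (Aavg μ E f g) ≤
          (C : ℝ≥0∞) * (C₀ : ℝ≥0∞) * eLpNorm f (ENNReal.ofReal p) volume *
            eLpNorm g (ENNReal.ofReal q) volume := by
  classical
  -- exponent facts
  have h1r : 1 < 1/r := hr ▸ hBanach
  have hr' : 0 < r := one_div_pos.mp (lt_trans one_pos h1r)
  have hrr₀ : r ≤ r₀ := by
    have h : 1/r₀ ≤ 1/r := by rw [hr]; exact hr₀'
    exact le_of_one_div_le_one_div hr₀ h
  set θ : ℝ := r / r₀ with hθdef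
  have hθ0 : 0 < θ := div_pos hr' hr₀
  have hθ1 : θ ≤ 1 := (div_le_one hr₀).mpr hrr₀
  have hrθ : r₀ * θ = r := by rw [hθdef]; field_simp
  have hrp : r < p := by
    have h : 1/p < 1/r := by rw [hr]; have : 0 < 1/q := one_div_pos.mpr hq; linarith
    exact lt_of_one_div_lt_one_div hp h
  have hrq : r < q := by
    have h : 1/q < 1/r := by rw [hr]; have : 0 < 1/p := one_div_pos.mpr hp; linarith
    exact lt_of_one_div_lt_one_div hq h
  have hconj : Real.HolderConjugate (p/r) (q/r) := by
    constructor
    · rw [inv_one, inv_div, inv_div]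
      have hmul : r * (1/p + 1/q) = 1 := by rw [← hr]; field_simp
      rw [div_eq_mul_one_div r p, div_eq_mul_one_div r q, ← mul_add]
      exact hmul
    · positivity
    · positivity
  -- geometry setup
  have hd1 : (1:ℝ) ≤ d := by exact_mod_cast hd
  set R : ℝ := d + 2*K with hRdef
  have hR0 : 0 < R := by rw [hRdef]; nlinarith
  have hsqrtd : Real.sqrt d ≤ (d:ℝ) := by
    rw [Real.sqrt_le_left (by linarith : (0:ℝ) ≤ d)]
    nlinarith
  set M₁ : ℕ := ⌈2*R⌉₊ + 1 with hM₁def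
  set M : ℕ := M₁ ^ d with hMdef
  refine ⟨((2:ℝ≥0∞) ^ (1/r) * (M:ℝ≥0∞) ^ (1/p) * (M:ℝ≥0∞) ^ (1/q)).toNNReal, ?_⟩
  intro C₀ hbound f g hf hg
  set c : (Fin d → ℤ) → Ed d := fun l => WithLp.toLp 2 (fun i => (l i : ℝ)) with hcdef
  set N : (Fin d → ℤ) → Set (Ed d) := fun l => Metric.closedBall (c l) R with hNdef
  set Q : (Fin d → ℤ) → Set (Ed d) := fun l => {x : Ed d | ∀ i, ⌊x i⌋ = l i} with hQdef
  have hNmeas : ∀ l, MeasurableSet (N l) := fun l => measurableSet_closedBall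
  have hcoordmeas : ∀ i : Fin d, Measurable (fun x : Ed d => x i) := fun i =>
    (measurable_pi_apply i).comp (MeasurableEquiv.toLp 2 (Fin d → ℝ)).symm.measurable
  have hQmeas : ∀ l, MeasurableSet (Q l) := by
    intro l
    have : Q l = ⋂ i, (fun x : Ed d => ⌊x i⌋) ⁻¹' {l i} := by
      ext x; simp [hQdef, Set.mem_iInter]
    rw [this]
    exact MeasurableSet.iInter fun i =>
      (Int.measurable_floor.comp (hcoordmeas i)) (measurableSet_singleton _)
  -- each cube has volume at most 1
  have hQvol : ∀ l, volume (Q l) ≤ 1 := by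
    intro l
    have hsub : Q l ⊆ (MeasurableEquiv.toLp 2 (Fin d → ℝ)).symm ⁻¹'
        (Set.univ.pi fun i => Set.Icc (l i : ℝ) (l i + 1)) := by
      intro x hx
      simp only [Set.mem_preimage, Set.mem_pi, Set.mem_univ, forall_true_left]
      intro i
      have h := hx i
      constructor
      · show (l i : ℝ) ≤ x i
        rw [← h]; exact Int.floor_le _
      · show x i ≤ (l i : ℝ) + 1
        rw [← h]; exact le_of_lt (Int.lt_floor_add_one _)
    calc volume (Q l) ≤ volume ((MeasurableEquiv.toLp 2 (Fin d → ℝ)).symm ⁻¹'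
          (Set.univ.pi fun i => Set.Icc (l i : ℝ) (l i + 1))) := measure_mono hsub
      _ = volume (Set.univ.pi fun i => Set.Icc (l i : ℝ) (l i + 1)) :=
          (EuclideanSpace.volume_preserving_symm_measurableEquiv_toLp (Fin d)).measure_preimage
            ((MeasurableSet.univ_pi fun i => measurableSet_Icc).nullMeasurableSet)
      _ = 1 := by
          rw [volume_pi_pi]
          simp [Real.volume_Icc]
  have hQunion : (⋃ l, Q l) = Set.univ := by
    apply Set.eq_univ_of_forall
    intro x
    exact Set.mem_iUnion.mpr ⟨fun i => ⌊x i⌋, fun i => rfl⟩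
  -- localization
  have hcube : ∀ (l : Fin d → ℤ) (x : Ed d), x ∈ Q l → ‖x - c l‖ ≤ Real.sqrt d := by
    intro l x hx
    apply aux_cube_dist
    intro i
    have h := hx i
    constructor
    · show (l i : ℝ) ≤ x i
      rw [← h]; exact Int.floor_le _
    · show x i < (l i : ℝ) + 1
      rw [← h]; exact Int.lt_floor_add_one _
  have hloc : ∀ (l : Fin d → ℤ) (x : Ed d), x ∈ Q l → ∀ (f₁ g₁ : Ed d → ℂ),
      Aavg μ E f₁ g₁ x ≤ Aavg μ E ((N l).indicator f₁) ((N l).indicator g₁) x := by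
    intro l x hx f₁ g₁
    have hdist : ∀ t ∈ E, ∀ v : Ed d, ‖v‖ ≤ K → x - t • v ∈ N l := by
      intro t ht v hv
      have h1 : ‖x - c l‖ ≤ Real.sqrt d := hcube l x hx
      have ht' := hE ht
      have htabs : |t| ≤ 2 := abs_le.mpr ⟨by linarith [ht'.1], ht'.2⟩
      rw [hNdef, Metric.mem_closedBall, dist_eq_norm]
      have heq : (x - t • v) - c l = (x - c l) - t • v := by abel
      rw [heq]
      calc ‖(x - c l) - t • v‖ ≤ ‖x - c l‖ + ‖t • v‖ := norm_sub_le _ _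
        _ ≤ Real.sqrt d + |t| * ‖v‖ := by rw [norm_smul, Real.norm_eq_abs]; gcongr
        _ ≤ (d:ℝ) + 2 * K := by
            have : |t| * ‖v‖ ≤ 2 * K := by
              apply mul_le_mul htabs hv (norm_nonneg _) (by norm_num)
            linarith
        _ = R := hRdef.symm
    have hae : ∀ᵐ pt ∂μ, Real.sqrt (‖pt.1‖^2 + ‖pt.2‖^2) ≤ K := by
      rw [MeasureTheory.ae_iff]; exact hsupp
    have hint : ∀ t ∈ E, ∫ pt, f₁ (x - t • pt.1) * g₁ (x - t • pt.2) ∂μ =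
        ∫ pt, (N l).indicator f₁ (x - t • pt.1) * (N l).indicator g₁ (x - t • pt.2) ∂μ := by
      intro t ht
      apply integral_congr_ae
      filter_upwards [hae] with pt hpt
      have h1 : ‖pt.1‖ ≤ K := by
        rw [show ‖pt.1‖ = Real.sqrt (‖pt.1‖^2) from (Real.sqrt_sq (norm_nonneg _)).symm]
        exact le_trans (Real.sqrt_le_sqrt (le_add_of_nonneg_right (sq_nonneg _))) hpt
      have h2 : ‖pt.2‖ ≤ K := by
        rw [show ‖pt.2‖ = Real.sqrt (‖pt.2‖^2) from (Real.sqrt_sq (norm_nonneg _)).symm]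
        exact le_trans (Real.sqrt_le_sqrt (le_add_of_nonneg_left (sq_nonneg _))) hpt
      rw [Set.indicator_of_mem (hdist t ht _ h1), Set.indicator_of_mem (hdist t ht _ h2)]
    unfold Aavg
    refine iSup₂_le fun t ht => ?_
    rw [hint t ht]
    exact le_iSup₂ (f := fun (t : ℝ) (_ : t ∈ E) =>
      (‖∫ pt, (N l).indicator f₁ (x - t • pt.1) * (N l).indicator g₁ (x - t • pt.2) ∂μ‖₊ : ℝ≥0∞)) t ht
  -- Lp norms of pieces
  set A : ℝ≥0∞ := ∫⁻ x, (‖f x‖₊ : ℝ≥0∞) ^ p with hAdef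
  set B : ℝ≥0∞ := ∫⁻ x, (‖g x‖₊ : ℝ≥0∞) ^ q with hBdef
  have hofp : (ENNReal.ofReal p) ≠ 0 := by simp [ENNReal.ofReal_eq_zero, not_le, hp]
  have hofq : (ENNReal.ofReal q) ≠ 0 := by simp [ENNReal.ofReal_eq_zero, not_le, hq]
  have hfA : eLpNorm f (ENNReal.ofReal p) volume = A ^ (1/p) := by
    rw [eLpNorm_eq_lintegral_rpow_enorm_toReal hofp ENNReal.ofReal_ne_top,
      ENNReal.toReal_ofReal hp.le]
    simp only [enorm_eq_nnnorm, hAdef]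
  have hgB : eLpNorm g (ENNReal.ofReal q) volume = B ^ (1/q) := by
    rw [eLpNorm_eq_lintegral_rpow_enorm_toReal hofq ENNReal.ofReal_ne_top,
      ENNReal.toReal_ofReal hq.le]
    simp only [enorm_eq_nnnorm, hBdef]
  set a : (Fin d → ℤ) → ℝ≥0∞ := fun l => eLpNorm ((N l).indicator f) (ENNReal.ofReal p) volume
    with hadef
  set b : (Fin d → ℤ) → ℝ≥0∞ := fun l => eLpNorm ((N l).indicator g) (ENNReal.ofReal q) volume
    with hbdef
  have hap : ∀ l, a l ^ p = ∫⁻ x in N l, (‖f x‖₊ : ℝ≥0∞) ^ p := by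
    intro l
    simp only [hadef]
    rw [eLpNorm_eq_lintegral_rpow_enorm_toReal hofp ENNReal.ofReal_ne_top,
      ENNReal.toReal_ofReal hp.le, ← ENNReal.rpow_mul, one_div,
      inv_mul_cancel₀ hp.ne', ENNReal.rpow_one]
    rw [← lintegral_indicator (hNmeas l)]
    apply lintegral_congr
    intro x
    by_cases hx : x ∈ N l <;>
      simp [Set.indicator_of_mem, Set.indicator_of_notMem, hx, enorm_eq_nnnorm,
        ENNReal.zero_rpow_of_pos hp]
  have hbq : ∀ l, b l ^ q = ∫⁻ x in N l, (‖g x‖₊ : ℝ≥0∞) ^ q := by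
    intro l
    simp only [hbdef]
    rw [eLpNorm_eq_lintegral_rpow_enorm_toReal hofq ENNReal.ofReal_ne_top,
      ENNReal.toReal_ofReal hq.le, ← ENNReal.rpow_mul, one_div,
      inv_mul_cancel₀ hq.ne', ENNReal.rpow_one]
    rw [← lintegral_indicator (hNmeas l)]
    apply lintegral_congr
    intro x
    by_cases hx : x ∈ N l <;>
      simp [Set.indicator_of_mem, Set.indicator_of_notMem, hx, enorm_eq_nnnorm,
        ENNReal.zero_rpow_of_pos hq]
  -- bounded overlap
  have hoverlap : ∀ x : Ed d, (∑' l : Fin d → ℤ, (N l).indicator (1 : Ed d → ℝ≥0∞) x)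
      ≤ (M : ℝ≥0∞) := by
    intro x
    set Bx : Finset (Fin d → ℤ) :=
      Fintype.piFinset fun i => Finset.Icc ⌈x i - R⌉ ⌊x i + R⌋ with hBxdef
    have hvanish : ∀ l ∉ Bx, (N l).indicator (1 : Ed d → ℝ≥0∞) x = 0 := by
      intro l hl
      rw [Set.indicator_apply_eq_zero]
      intro hxl
      exfalso
      apply hl
      rw [hBxdef, Fintype.mem_piFinset]
      intro i
      rw [Finset.mem_Icc]
      have hd1 : ‖x - c l‖ ≤ R := by
        rw [hNdef] at hxl
        rw [← dist_eq_norm]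
        exact Metric.mem_closedBall.mp hxl
      have hci : ‖(x - c l) i‖ ≤ R := le_trans (aux_coord_le _ i) hd1
      have hci' : |x i - (l i : ℝ)| ≤ R := by
        have : (x - c l) i = x i - (l i : ℝ) := rfl
        rwa [this, Real.norm_eq_abs] at hci
      rw [abs_le] at hci'
      constructor
      · apply Int.ceil_le.mpr; linarith [hci'.2]
      · apply Int.le_floor.mpr; linarith [hci'.1]
    rw [tsum_eq_sum hvanish]
    calc ∑ l ∈ Bx, (N l).indicator (1 : Ed d → ℝ≥0∞) x
        ≤ ∑ _l ∈ Bx, (1:ℝ≥0∞) := by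
          apply Finset.sum_le_sum
          intro l _
          by_cases hx' : x ∈ N l <;> simp [hx']
      _ = (Bx.card : ℝ≥0∞) := by simp
      _ ≤ (M : ℝ≥0∞) := by
          have hcard : Bx.card ≤ M := by
            rw [hBxdef, Fintype.card_piFinset, hMdef]
            calc ∏ i, (Finset.Icc ⌈x i - R⌉ ⌊x i + R⌋).card
                ≤ ∏ _i : Fin d, M₁ := by
                  apply Finset.prod_le_prod'
                  intro i _
                  rw [Int.card_Icc]
                  rw [Int.toNat_le]
                  have h1 : (⌊x i + R⌋ : ℝ) ≤ x i + R := Int.floor_le _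
                  have h2 : x i - R ≤ (⌈x i - R⌉ : ℝ) := Int.le_ceil _
                  have h3 : (2*R : ℝ) ≤ (⌈2*R⌉₊ : ℕ) := Nat.le_ceil _
                  have : ((⌊x i + R⌋ + 1 - ⌈x i - R⌉ : ℤ) : ℝ) ≤ ((M₁ : ℤ) : ℝ) := by
                    push_cast [hM₁def]
                    linarith
                  exact_mod_cast this
              _ = M₁ ^ d := by
                  rw [Finset.prod_const, Finset.card_univ, Fintype.card_fin]
          exact_mod_cast hcard
  have hsum_a : ∑' l, a l ^ p ≤ (M : ℝ≥0∞) * A := by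
    have hh : Measurable fun x : Ed d => (‖f x‖₊ : ℝ≥0∞) ^ p :=
      hf.nnnorm.coe_nnreal_ennreal.pow measurable_const
    calc ∑' l, a l ^ p = ∑' l, ∫⁻ x, (N l).indicator (fun x => (‖f x‖₊ : ℝ≥0∞) ^ p) x := by
          apply tsum_congr
          intro l
          rw [hap l, lintegral_indicator (hNmeas l)]
      _ = ∫⁻ x, ∑' l, (N l).indicator (fun x => (‖f x‖₊ : ℝ≥0∞) ^ p) x :=
          (lintegral_tsum fun l => (hh.indicator (hNmeas l)).aemeasurable).symm
      _ ≤ ∫⁻ x, (M : ℝ≥0∞) * (‖f x‖₊ : ℝ≥0∞) ^ p := by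
          refine lintegral_mono fun x => ?_
          have heach : ∀ l, (N l).indicator (fun x => (‖f x‖₊ : ℝ≥0∞) ^ p) x
              = (N l).indicator (1 : Ed d → ℝ≥0∞) x * (‖f x‖₊ : ℝ≥0∞) ^ p := by
            intro l
            by_cases hx' : x ∈ N l <;> simp [hx']
          refine le_trans (le_of_eq ((tsum_congr heach).trans ENNReal.tsum_mul_right)) ?_
          exact mul_le_mul_left (hoverlap x) _
      _ = (M : ℝ≥0∞) * A := by
          rw [lintegral_const_mul' _ _ (by simp : (M:ℝ≥0∞) ≠ ⊤), hAdef]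
  have hsum_b : ∑' l, b l ^ q ≤ (M : ℝ≥0∞) * B := by
    have hh : Measurable fun x : Ed d => (‖g x‖₊ : ℝ≥0∞) ^ q :=
      hg.nnnorm.coe_nnreal_ennreal.pow measurable_const
    calc ∑' l, b l ^ q = ∑' l, ∫⁻ x, (N l).indicator (fun x => (‖g x‖₊ : ℝ≥0∞) ^ q) x := by
          apply tsum_congr
          intro l
          rw [hbq l, lintegral_indicator (hNmeas l)]
      _ = ∫⁻ x, ∑' l, (N l).indicator (fun x => (‖g x‖₊ : ℝ≥0∞) ^ q) x :=
          (lintegral_tsum fun l => (hh.indicator (hNmeas l)).aemeasurable).symm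
      _ ≤ ∫⁻ x, (M : ℝ≥0∞) * (‖g x‖₊ : ℝ≥0∞) ^ q := by
          refine lintegral_mono fun x => ?_
          have heach : ∀ l, (N l).indicator (fun x => (‖g x‖₊ : ℝ≥0∞) ^ q) x
              = (N l).indicator (1 : Ed d → ℝ≥0∞) x * (‖g x‖₊ : ℝ≥0∞) ^ q := by
            intro l
            by_cases hx' : x ∈ N l <;> simp [hx']
          refine le_trans (le_of_eq ((tsum_congr heach).trans ENNReal.tsum_mul_right)) ?_
          exact mul_le_mul_left (hoverlap x) _
      _ = (M : ℝ≥0∞) * B := by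
          rw [lintegral_const_mul' _ _ (by simp : (M:ℝ≥0∞) ≠ ⊤), hBdef]
  -- per-cube estimate
  set F := Aavg μ E f g with hFdef
  have per_l : ∀ l, ∫⁻ x in Q l, F x ^ r ≤ 2 * ((C₀ : ℝ≥0∞) * a l * b l) ^ r := by
    intro l
    set G := Aavg μ E ((N l).indicator f) ((N l).indicator g) with hGdef
    have hb1 : lpNormENN r₀ G ≤ (C₀ : ℝ≥0∞) * a l * b l :=
      hbound _ _ (hf.indicator (hNmeas l)) (hg.indicator (hNmeas l))
    have hb2 : ∫⁻ x, G x ^ r₀ ≤ ((C₀ : ℝ≥0∞) * a l * b l) ^ r₀ := by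
      have h := ENNReal.rpow_le_rpow hb1 hr₀.le
      unfold lpNormENN at h
      rwa [← ENNReal.rpow_mul, one_div, inv_mul_cancel₀ hr₀.ne', ENNReal.rpow_one] at h
    calc ∫⁻ x in Q l, F x ^ r ≤ ∫⁻ x in Q l, G x ^ r :=
          setLIntegral_mono' (hQmeas l) fun x hx =>
            ENNReal.rpow_le_rpow (hloc l x hx f g) hr'.le
      _ = ∫⁻ x in Q l, (G x ^ r₀) ^ θ :=
          lintegral_congr fun x => by rw [← ENNReal.rpow_mul, hrθ]
      _ ≤ 2 * (∫⁻ x in Q l, G x ^ r₀) ^ θ :=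
          jensen_aux _ (by rw [Measure.restrict_apply_univ]; exact hQvol l) _ hθ0 hθ1
      _ ≤ 2 * (∫⁻ x, G x ^ r₀) ^ θ := by
          gcongr
          exact Measure.restrict_le_self
      _ ≤ 2 * (((C₀ : ℝ≥0∞) * a l * b l) ^ r₀) ^ θ := by
          gcongr
      _ = 2 * ((C₀ : ℝ≥0∞) * a l * b l) ^ r := by rw [← ENNReal.rpow_mul, hrθ]
  -- Hölder in l
  have holder : ∑' l, a l ^ r * b l ^ r ≤
      (∑' l, a l ^ p) ^ (r/p) * (∑' l, b l ^ q) ^ (r/q) := by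
    have h := ENNReal.lintegral_mul_le_Lp_mul_Lq (Measure.count : Measure (Fin d → ℤ))
      hconj (f := fun l => a l ^ r) (g := fun l => b l ^ r)
      (measurable_of_countable _).aemeasurable (measurable_of_countable _).aemeasurable
    rw [lintegral_count, lintegral_count, lintegral_count] at h
    have e1 : ∀ l, (a l ^ r) ^ (p/r) = a l ^ p := fun l => by
      rw [← ENNReal.rpow_mul]
      congr 1
      field_simp
    have e2 : ∀ l, (b l ^ r) ^ (q/r) = b l ^ q := fun l => by
      rw [← ENNReal.rpow_mul]
      congr 1
      field_simp
    simp only [Pi.mul_apply] at h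
    rw [tsum_congr e1, tsum_congr e2, one_div_div, one_div_div] at h
    exact h
  -- assemble
  have main : ∫⁻ x, F x ^ r ≤
      2 * (C₀ : ℝ≥0∞) ^ r * ((M : ℝ≥0∞) * A) ^ (r/p) * ((M : ℝ≥0∞) * B) ^ (r/q) := by
    calc ∫⁻ x, F x ^ r = ∫⁻ x in ⋃ l, Q l, F x ^ r := by
          rw [hQunion, Measure.restrict_univ]
      _ ≤ ∑' l, ∫⁻ x in Q l, F x ^ r := lintegral_iUnion_le _ _
      _ ≤ ∑' l, 2 * ((C₀ : ℝ≥0∞) * a l * b l) ^ r :=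
          ENNReal.tsum_le_tsum per_l
      _ = 2 * (C₀ : ℝ≥0∞) ^ r * ∑' l, a l ^ r * b l ^ r := by
          rw [← ENNReal.tsum_mul_left]
          apply tsum_congr
          intro l
          rw [ENNReal.mul_rpow_of_nonneg _ _ hr'.le, ENNReal.mul_rpow_of_nonneg _ _ hr'.le]
          ring
      _ ≤ 2 * (C₀ : ℝ≥0∞) ^ r * ((∑' l, a l ^ p) ^ (r/p) * (∑' l, b l ^ q) ^ (r/q)) :=
          mul_le_mul_right holder _
      _ ≤ 2 * (C₀ : ℝ≥0∞) ^ r * (((M : ℝ≥0∞) * A) ^ (r/p) * ((M : ℝ≥0∞) * B) ^ (r/q)) := by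
          gcongr
      _ = 2 * (C₀ : ℝ≥0∞) ^ r * ((M : ℝ≥0∞) * A) ^ (r/p) * ((M : ℝ≥0∞) * B) ^ (r/q) := by
          ring
  -- final computation
  have hCne : (2:ℝ≥0∞) ^ (1/r) * (M:ℝ≥0∞) ^ (1/p) * (M:ℝ≥0∞) ^ (1/q) ≠ ⊤ := by
    apply ENNReal.mul_ne_top
    apply ENNReal.mul_ne_top
    · exact ENNReal.rpow_ne_top_of_nonneg (by positivity) (by norm_num)
    · exact ENNReal.rpow_ne_top_of_nonneg (by positivity) (by simp)
    · exact ENNReal.rpow_ne_top_of_nonneg (by positivity) (by simp)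
  rw [ENNReal.coe_toNNReal hCne]
  have hfinal : lpNormENN r F ≤
      (2:ℝ≥0∞) ^ (1/r) * (C₀ : ℝ≥0∞) * ((M:ℝ≥0∞) ^ (1/p) * A ^ (1/p)) *
        ((M:ℝ≥0∞) ^ (1/q) * B ^ (1/q)) := by
    unfold lpNormENN
    calc (∫⁻ x, F x ^ r) ^ (1/r)
        ≤ (2 * (C₀ : ℝ≥0∞) ^ r * ((M : ℝ≥0∞) * A) ^ (r/p) * ((M : ℝ≥0∞) * B) ^ (r/q)) ^ (1/r) :=
          ENNReal.rpow_le_rpow main (by positivity)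
      _ = (2:ℝ≥0∞) ^ (1/r) * (C₀ : ℝ≥0∞) * ((M:ℝ≥0∞) ^ (1/p) * A ^ (1/p)) *
          ((M:ℝ≥0∞) ^ (1/q) * B ^ (1/q)) := by
          rw [ENNReal.mul_rpow_of_nonneg _ _ (by positivity : (0:ℝ) ≤ 1/r),
            ENNReal.mul_rpow_of_nonneg _ _ (by positivity : (0:ℝ) ≤ 1/r),
            ENNReal.mul_rpow_of_nonneg _ _ (by positivity : (0:ℝ) ≤ 1/r)]
          rw [← ENNReal.rpow_mul ((C₀:ℝ≥0∞)) r (1/r), mul_one_div, div_self hr'.ne',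
            ENNReal.rpow_one]
          rw [← ENNReal.rpow_mul ((M : ℝ≥0∞) * A) (r/p) (1/r),
            ← ENNReal.rpow_mul ((M : ℝ≥0∞) * B) (r/q) (1/r)]
          rw [show r/p * (1/r) = 1/p by field_simp,
            show r/q * (1/r) = 1/q by field_simp]
          rw [ENNReal.mul_rpow_of_nonneg _ _ (by positivity : (0:ℝ) ≤ 1/p),
            ENNReal.mul_rpow_of_nonneg _ _ (by positivity : (0:ℝ) ≤ 1/q)]
  calc lpNormENN r (Aavg μ E f g) = lpNormENN r F := by rw [hFdef]
    _ ≤ (2:ℝ≥0∞) ^ (1/r) * (C₀ : ℝ≥0∞) * ((M:ℝ≥0∞) ^ (1/p) * A ^ (1/p)) *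
        ((M:ℝ≥0∞) ^ (1/q) * B ^ (1/q)) := hfinal
    _ = (2:ℝ≥0∞) ^ (1/r) * (M:ℝ≥0∞) ^ (1/p) * (M:ℝ≥0∞) ^ (1/q) * (C₀ : ℝ≥0∞) *
        eLpNorm f (ENNReal.ofReal p) volume * eLpNorm g (ENNReal.ofReal q) volume := by
        rw [hfA, hgB]; ring
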